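/- arXiv:2507.16447 — 2 statements merged into one kernel-verified Lean document; each statement's English description precedes it below -/
import Mathlib

section
/- Supersolution property: let D₁ ∈ (0,1/2], ε ∈ (0,1), M ≥ 0, α ≥ 0, |Ω| > 0, and set D₂ = ε^{−2}[1/2 + ε(M + |Ω|α/3)], φ̄(t) = 1 − D₁e^{−D₂t}. Then for every t ≥ 0 and every real s with |s| ≤ M + |Ω|α/3, one has φ̄(1−φ̄)(φ̄ − 1/2) + ε·φ̄(1−φ̄)·s ≤ ε²·φ̄'(t). -/
/-!
Write `u = 1 - φ̄(t) = D₁e^{-D₂t} ∈ (0, 1/2]`, so `φ̄ ∈ [1/2, 1]` and `φ̄' = D₂u`.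
On `[1/2, 1]` the cubic term is at most `u/2` and the drift term is at most `ε(M + |Ω|α/3)u`;
`D₂` is chosen so that `ε²D₂u` is exactly the sum of these two bounds.
-/

open Real Set

theorem hasDerivAt_one_sub_mul_exp_neg_mul (a b t : ℝ) :
    HasDerivAt (fun t => 1 - a * exp (-b * t)) (a * b * exp (-b * t)) t := by
  have hlin : HasDerivAt (fun t : ℝ => -b * t) (-b) t := by
    simpa using (hasDerivAt_id t).const_mul (-b)
  exact ((hlin.exp.const_mul a).const_sub 1).congr_deriv (by ring)

theorem one_sub_mul_exp_neg_mul_mem_Icc {a b t : ℝ} (ha : a ∈ Ioc 0 (1 / 2)) (hb : 0 ≤ b)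
    (ht : 0 ≤ t) : 1 - a * exp (-b * t) ∈ Icc (1 / 2) 1 := by
  have hexp : exp (-b * t) ≤ 1 := exp_le_one_iff.mpr (by nlinarith)
  have hu : a * exp (-b * t) ≤ a := mul_le_of_le_one_right ha.1.le hexp
  constructor <;> nlinarith [ha.2, mul_pos ha.1 (exp_pos (-b * t))]

theorem mul_one_sub_mul_sub_half_le {p : ℝ} (hp : p ∈ Icc (1 / 2) 1) :
    p * (1 - p) * (p - 1 / 2) ≤ (1 - p) / 2 := by
  have hq : 0 ≤ 1 - p := by linarith [hp.2]
  have hcubic : p * (p - 1 / 2) ≤ 1 / 2 := by nlinarith [hp.1, hp.2]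
  nlinarith [mul_le_mul_of_nonneg_left hcubic hq]

theorem mul_mul_one_sub_mul_le {ε p s K : ℝ} (hε : 0 ≤ ε) (hp : p ∈ Icc 0 1) (hs : |s| ≤ K) :
    ε * (p * (1 - p)) * s ≤ ε * K * (1 - p) := by
  have hq : 0 ≤ 1 - p := by linarith [hp.2]
  have hps : p * s ≤ K := by
    calc p * s ≤ |p * s| := le_abs_self _
      _ = p * |s| := by rw [abs_mul, abs_of_nonneg hp.1]
      _ ≤ 1 * K := mul_le_mul hp.2 hs (abs_nonneg s) zero_le_one
      _ = K := one_mul K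
  nlinarith [mul_le_mul_of_nonneg_left hps (mul_nonneg hε hq)]

theorem stmt11_general (D₁ ε M α vol : ℝ)
    (hD₁ : D₁ ∈ Set.Ioc (0:ℝ) (1/2)) (hε : ε ∈ Set.Ioo (0:ℝ) 1)
    (D₂ : ℝ) (hD₂ : D₂ = ε ^ (-2 : ℤ) * (1 / 2 + ε * (M + vol * α / 3)))
    (φbar : ℝ → ℝ) (hφbar : ∀ t, φbar t = 1 - D₁ * Real.exp (-D₂ * t)) :
    ∀ t, 0 ≤ t → ∀ s : ℝ, |s| ≤ M + vol * α / 3 →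
      φbar t * (1 - φbar t) * (φbar t - 1 / 2) + ε * (φbar t * (1 - φbar t)) * s
        ≤ ε ^ 2 * deriv φbar t := by
  intro t ht s hs
  set K := M + vol * α / 3
  have hK : 0 ≤ K := (abs_nonneg s).trans hs
  have hεD₂ : ε ^ 2 * D₂ = 1 / 2 + ε * K := by
    rw [hD₂, ← zpow_natCast, ← mul_assoc, ← zpow_add₀ hε.1.ne']
    simp
  have hD₂_nonneg : 0 ≤ D₂ := by rw [hD₂]; have := hε.1; positivity
  have hφ : φbar t ∈ Icc (1 / 2) 1 := hφbar t ▸ one_sub_mul_exp_neg_mul_mem_Icc hD₁ hD₂_nonneg ht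
  have hderiv : deriv φbar t = D₁ * D₂ * exp (-D₂ * t) := by
    rw [show φbar = _ from funext hφbar]
    exact (hasDerivAt_one_sub_mul_exp_neg_mul D₁ D₂ t).deriv
  calc _ ≤ (1 - φbar t) / 2 + ε * K * (1 - φbar t) :=
        add_le_add (mul_one_sub_mul_sub_half_le hφ)
          (mul_mul_one_sub_mul_le hε.1.le ⟨by linarith [hφ.1], hφ.2⟩ hs)
    _ = ε ^ 2 * deriv φbar t := by
        rw [hderiv, hφbar t]
        linear_combination (-(D₁ * exp (-D₂ * t))) * hεD₂

/-- Supersolution property: with `D₂ = ε⁻²(1/2 + ε(M + |Ω|α/3))` and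
`φ̄(t) = 1 - D₁e^{-D₂t}`, for all `t ≥ 0` and `|s| ≤ M + |Ω|α/3`,
`φ̄(1-φ̄)(φ̄-1/2) + εφ̄(1-φ̄)s ≤ ε²φ̄'(t)`. -/
theorem stmt11 (D₁ ε M α vol : ℝ)
    (hD₁ : D₁ ∈ Set.Ioc (0:ℝ) (1/2)) (hε : ε ∈ Set.Ioo (0:ℝ) 1)
    (hM : 0 ≤ M) (hα : 0 ≤ α) (hvol : 0 < vol)
    (D₂ : ℝ) (hD₂ : D₂ = ε ^ (-2 : ℤ) * (1 / 2 + ε * (M + vol * α / 3)))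
    (φbar : ℝ → ℝ) (hφbar : ∀ t, φbar t = 1 - D₁ * Real.exp (-D₂ * t)) :
    ∀ t, 0 ≤ t → ∀ s : ℝ, |s| ≤ M + vol * α / 3 →
      φbar t * (1 - φbar t) * (φbar t - 1 / 2) + ε * (φbar t * (1 - φbar t)) * s
        ≤ ε ^ 2 * deriv φbar t :=
  stmt11_general D₁ ε M α vol hD₁ hε D₂ hD₂ φbar hφbar
end

section
/- Lower bound for ∫ G(φ)²: if φ : Ω → ℝ takes values in [0,1] and is measurable on a finite measure space Ω, and E := ∫_Ω W(φ)/(2ε) dx, then ∫_Ω G(φ)² dx ≥ (1/6)∫_Ω G(φ) dx − (11/9)·ε·E·2, i.e. ∫_Ω G(φ)² dx ≥ (1/6)∫_Ω G(φ) dx − (22/9)εE, where G(φ) = φ²/2 − φ³/3, W(φ) = φ²(1−φ)²/2. -/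
/-!
Pointwise, `(6G)² − 6G = (8φ² − 8φ − 6) W`, and `8φ² − 8φ − 6 = 2(2φ − 1)² − 8 ≥ −8` while
`W ≥ 0`, so `G² ≥ G/6 − (2/9) W`. Integrating (everything is integrable since `φ` is bounded) and
using `∫ W ≥ 0` gives the bound, as `(22/9) ε · W/(2ε) = (11/9) W`.
-/

open MeasureTheory

noncomputable def G (φ : ℝ) : ℝ := φ ^ 2 / 2 - φ ^ 3 / 3

noncomputable def W (φ : ℝ) : ℝ := φ ^ 2 * (1 - φ) ^ 2 / 2

lemma W_nonneg (y : ℝ) : 0 ≤ W y := by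
  unfold W
  positivity

lemma six_G_sq_sub_six_G (y : ℝ) : (6 * G y) ^ 2 - 6 * G y = (8 * y ^ 2 - 8 * y - 6) * W y := by
  unfold G W
  ring

lemma G_div_six_sub_le_G_sq (y : ℝ) : G y / 6 - 2 / 9 * W y ≤ G y ^ 2 := by
  have hfactor : -8 ≤ 8 * y ^ 2 - 8 * y - 6 := by nlinarith [sq_nonneg (2 * y - 1)]
  nlinarith [six_G_sq_sub_six_G y, mul_le_mul_of_nonneg_right hfactor (W_nonneg y)]

lemma Continuous.integrable_comp_of_mem_Icc {Ω : Type*} [MeasurableSpace Ω] {μ : Measure Ω}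
    [IsFiniteMeasure μ] {f : ℝ → ℝ} (hf : Continuous f) {φ : Ω → ℝ} (hφm : Measurable φ)
    {a b : ℝ} (hφ : ∀ x, φ x ∈ Set.Icc a b) : Integrable (fun x => f (φ x)) μ := by
  obtain ⟨C, hC⟩ := isCompact_Icc.exists_bound_of_continuousOn hf.continuousOn
  exact .of_bound (hf.measurable.comp hφm).aestronglyMeasurable C
    (.of_forall fun x => hC _ (hφ x))

lemma integral_G_div_six_sub_le_integral_G_sq {Ω : Type*} [MeasurableSpace Ω] (μ : Measure Ω)
    [IsFiniteMeasure μ] {φ : Ω → ℝ} (hφm : Measurable φ) {a b : ℝ} (hφ : ∀ x, φ x ∈ Set.Icc a b) :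
    (∫ x, G (φ x) ∂μ) / 6 - 2 / 9 * ∫ x, W (φ x) ∂μ ≤ ∫ x, G (φ x) ^ 2 ∂μ := by
  have hG : Continuous G := by unfold G; fun_prop
  have hW : Continuous W := by unfold W; fun_prop
  have hGi := hG.integrable_comp_of_mem_Icc (μ := μ) hφm hφ
  have hWi := hW.integrable_comp_of_mem_Icc (μ := μ) hφm hφ
  have hG2i := (hG.pow 2).integrable_comp_of_mem_Icc (μ := μ) hφm hφ
  rw [← integral_div, ← integral_const_mul, ← integral_sub (hGi.div_const _) (hWi.const_mul _)]
  exact integral_mono ((hGi.div_const _).sub (hWi.const_mul _)) hG2i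
    fun x => G_div_six_sub_le_G_sq (φ x)

/-- Lower bound for `∫ G(φ)²`: for measurable `φ` with values in `[0,1]` on a finite
measure space and `E = ∫ W(φ)/(2ε)`,
`∫ G(φ)² ≥ (1/6)∫ G(φ) - (22/9)εE`. -/
theorem stmt17 {Ω : Type*} [MeasurableSpace Ω] (μ : Measure Ω) [IsFiniteMeasure μ]
    (ε : ℝ) (hε : 0 < ε) (φ : Ω → ℝ) (hφm : Measurable φ)
    (hφ : ∀ x, φ x ∈ Set.Icc (0:ℝ) 1) :
    (∫ x, G (φ x) ^ 2 ∂μ)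
      ≥ (1 / 6) * (∫ x, G (φ x) ∂μ) - (22 / 9) * ε * (∫ x, W (φ x) / (2 * ε) ∂μ) := by
  have hE : (22 / 9) * ε * (∫ x, W (φ x) / (2 * ε) ∂μ) = 11 / 9 * ∫ x, W (φ x) ∂μ := by
    rw [integral_div]
    field_simp
    ring
  have hW : 0 ≤ ∫ x, W (φ x) ∂μ := integral_nonneg fun x => W_nonneg (φ x)
  have hG := integral_G_div_six_sub_le_integral_G_sq μ hφm hφ
  rw [hE]
  linarith
end
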